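/- arXiv:1712.01803 — 3 statements merged into one kernel-verified Lean document; each statement's English description precedes it below -/
import Mathlib

section
/- Let R be a ring and let F be a nonempty family of two-sided ideals of R that is closed under unions of nonempty chains and under intersections of nonempty chains. Then for any A, B ∈ F with A ⊊ B there exist M, N ∈ F with A ⊆ M ⊊ N ⊆ B such that no ideal P ∈ F satisfies M ⊊ P ⊊ N. -/
open TwoSidedIdeal in
lemma chain_sSup_mem {R : Type*} [Ring R] {c : Set (TwoSidedIdeal R)}
    (hcne : c.Nonempty) (hc : IsChain (· ≤ ·) c) {b : R} (hb : b ∈ sSup c) :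
    ∃ I ∈ c, b ∈ I := by
  obtain ⟨I0, hI0⟩ := hcne
  let U : TwoSidedIdeal R := TwoSidedIdeal.mk' {x | ∃ I ∈ c, x ∈ I}
    ⟨I0, hI0, I0.zero_mem⟩
    (by rintro x y ⟨I, hI, hx⟩ ⟨J, hJ, hy⟩
        rcases hc.total hI hJ with h | h
        · exact ⟨J, hJ, add_mem _ (h hx) hy⟩
        · exact ⟨I, hI, add_mem _ hx (h hy)⟩)
    (by rintro x ⟨I, hI, hx⟩; exact ⟨I, hI, neg_mem _ hx⟩)
    (by rintro x y ⟨I, hI, hy⟩; exact ⟨I, hI, I.mul_mem_left _ _ hy⟩)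
    (by rintro x y ⟨I, hI, hx⟩; exact ⟨I, hI, I.mul_mem_right _ _ hx⟩)
  have hle : sSup c ≤ U := by
    apply sSup_le
    intro I hI
    rw [TwoSidedIdeal.le_iff]
    intro x hx
    rw [SetLike.mem_coe, TwoSidedIdeal.mem_mk']
    exact ⟨I, hI, hx⟩
  have := hle hb
  rwa [TwoSidedIdeal.mem_mk'] at this

theorem stmt8 {R : Type*} [Ring R] (F : Set (TwoSidedIdeal R)) (hne : F.Nonempty)
    (hsup : ∀ c ⊆ F, c.Nonempty → IsChain (· ≤ ·) c → sSup c ∈ F)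
    (hinf : ∀ c ⊆ F, c.Nonempty → IsChain (· ≤ ·) c → sInf c ∈ F) :
    ∀ A ∈ F, ∀ B ∈ F, A < B → ∃ M ∈ F, ∃ N ∈ F,
      A ≤ M ∧ M < N ∧ N ≤ B ∧ ∀ P ∈ F, ¬ (M < P ∧ P < N) := by
  intro A hA B hB hAB
  obtain ⟨b, hbB, hbA⟩ := SetLike.exists_of_lt hAB
  -- maximal M with A ≤ M ≤ B, b ∉ M
  set S : Set (TwoSidedIdeal R) := {I | I ∈ F ∧ A ≤ I ∧ I ≤ B ∧ b ∉ I} with hS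
  obtain ⟨M, hAM, hMmax⟩ := zorn_le_nonempty₀ S (fun c hcS hc y hy => by
    refine ⟨sSup c, ⟨hsup c (fun z hz => (hcS hz).1) ⟨y, hy⟩ hc, ?_, ?_, ?_⟩,
      fun z hz => le_sSup hz⟩
    · exact le_trans (hcS hy).2.1 (le_sSup hy)
    · exact sSup_le fun z hz => (hcS hz).2.2.1
    · intro hb
      obtain ⟨I, hIc, hbI⟩ := chain_sSup_mem ⟨y, hy⟩ hc hb
      exact (hcS hIc).2.2.2 hbI) A ⟨hA, le_refl A, le_of_lt hAB, hbA⟩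
  obtain ⟨hMF, hAleM, hMleB, hbM⟩ := hMmax.prop
  -- minimal N with M ≤ N ≤ B, b ∈ N
  set T : Set ((TwoSidedIdeal R)ᵒᵈ) := {I | OrderDual.ofDual I ∈ F ∧ M ≤ OrderDual.ofDual I ∧
    OrderDual.ofDual I ≤ B ∧ b ∈ OrderDual.ofDual I} with hT
  obtain ⟨N, hBN, hNmin⟩ := zorn_le_nonempty₀ T (fun c hcT hc y hy => by
    set c' : Set (TwoSidedIdeal R) := OrderDual.ofDual '' c with hc'
    have hc'chain : IsChain (· ≤ ·) c' := by
      rintro _ ⟨p, hp, rfl⟩ _ ⟨q, hq, rfl⟩ hpq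
      exact (hc hp hq (fun h => hpq (congrArg OrderDual.ofDual h))).symm
    have hc'ne : c'.Nonempty := ⟨OrderDual.ofDual y, y, hy, rfl⟩
    have hc'F : c' ⊆ F := by rintro _ ⟨p, hp, rfl⟩; exact (hcT hp).1
    refine ⟨OrderDual.toDual (sInf c'), ⟨hinf c' hc'F hc'ne hc'chain, ?_, ?_, ?_⟩, ?_⟩
    · exact le_sInf (by rintro _ ⟨p, hp, rfl⟩; exact (hcT hp).2.1)
    · exact le_trans (sInf_le ⟨y, hy, rfl⟩) (hcT hy).2.2.1
    · show b ∈ sInf c'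
      rw [TwoSidedIdeal.mem_sInf]
      rintro _ ⟨p, hp, rfl⟩
      exact (hcT hp).2.2.2
    · intro z hz
      exact (sInf_le ⟨z, hz, rfl⟩ : sInf c' ≤ OrderDual.ofDual z))
    (OrderDual.toDual B) ⟨hB, hMleB, le_refl B, hbB⟩
  obtain ⟨hNF, hMleN, hNleB, hbN⟩ := hNmin.prop
  refine ⟨M, hMF, OrderDual.ofDual N, hNF, hAleM, lt_of_le_of_ne hMleN ?_, hNleB, ?_⟩
  · rintro rfl; exact hbM hbN
  · rintro P hPF ⟨hMP, hPN⟩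
    by_cases hbP : b ∈ P
    · exact hPN.not_ge (hNmin.2 (y := OrderDual.toDual P)
        ⟨hPF, hMP.le, hPN.le.trans hNleB, hbP⟩ hPN.le)
    · exact hMP.not_ge (hMmax.2 ⟨hPF, hAleM.trans hMP.le, hPN.le.trans hNleB, hbP⟩ hMP.le)
end

section
/- Let R be a ring in which the union of every nonempty chain of prime two-sided ideals is again a prime ideal. Then the prime ideals of R satisfy the Kaplansky Property: for any prime ideals P ⊊ Q there exist prime ideals P', Q' with P ⊆ P' ⊊ Q' ⊆ Q such that no prime ideal lies strictly between P' and Q'. -/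
/-- A two-sided ideal `P` of a ring is prime if it is proper and
`aRb ⊆ P` implies `a ∈ P` or `b ∈ P`. -/
def IsPrimeTwoSided {R : Type*} [Ring R] (P : TwoSidedIdeal R) : Prop :=
  P ≠ ⊤ ∧ ∀ a b : R, (∀ r : R, a * r * b ∈ P) → a ∈ P ∨ b ∈ P

/-- Membership in the sup of a nonempty chain of two-sided ideals. -/
lemma mem_sSup_chain {R : Type*} [Ring R] {c : Set (TwoSidedIdeal R)}
    (hne : c.Nonempty) (hc : IsChain (· ≤ ·) c) {x : R} (hx : x ∈ sSup c) :
    ∃ I ∈ c, x ∈ I := by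
  obtain ⟨I₀, hI₀⟩ := hne
  set U : TwoSidedIdeal R := TwoSidedIdeal.mk' (⋃ I ∈ c, (I : Set R))
    (Set.mem_biUnion hI₀ (TwoSidedIdeal.zero_mem I₀))
    (by
      rintro x y hx hy
      simp only [Set.mem_iUnion, SetLike.mem_coe] at hx hy ⊢
      obtain ⟨I, hI, hxI⟩ := hx
      obtain ⟨J, hJ, hyJ⟩ := hy
      rcases hc.total hI hJ with h | h
      · exact ⟨J, hJ, J.add_mem (h hxI) hyJ⟩
      · exact ⟨I, hI, I.add_mem hxI (h hyJ)⟩)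
    (by
      rintro x hx
      simp only [Set.mem_iUnion, SetLike.mem_coe] at hx ⊢
      obtain ⟨I, hI, hxI⟩ := hx
      exact ⟨I, hI, I.neg_mem hxI⟩)
    (by
      rintro x y hy
      simp only [Set.mem_iUnion, SetLike.mem_coe] at hy ⊢
      obtain ⟨I, hI, hyI⟩ := hy
      exact ⟨I, hI, I.mul_mem_left _ _ hyI⟩)
    (by
      rintro x y hx
      simp only [Set.mem_iUnion, SetLike.mem_coe] at hx ⊢
      obtain ⟨I, hI, hxI⟩ := hx
      exact ⟨I, hI, I.mul_mem_right _ _ hxI⟩) with hU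
  have hle : sSup c ≤ U := sSup_le fun I hI y hy => by
    rw [hU, TwoSidedIdeal.mem_mk']
    exact Set.mem_biUnion hI hy
  have := hle hx
  rw [hU, TwoSidedIdeal.mem_mk'] at this
  simp only [Set.mem_iUnion, SetLike.mem_coe] at this
  obtain ⟨I, hI, hxI⟩ := this
  exact ⟨I, hI, hxI⟩

/-- The intersection of a nonempty chain of prime two-sided ideals is prime. -/
lemma sInf_chain_prime {R : Type*} [Ring R] (c : Set (TwoSidedIdeal R))
    (hne : c.Nonempty) (hc : IsChain (· ≤ ·) c)
    (hp : ∀ P ∈ c, IsPrimeTwoSided P) : IsPrimeTwoSided (sInf c) := by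
  obtain ⟨P₀, hP₀⟩ := hne
  constructor
  · intro h
    exact (hp P₀ hP₀).1 (top_le_iff.mp (h ▸ sInf_le hP₀))
  · intro a b hab
    by_contra h
    push_neg at h
    obtain ⟨ha, hb⟩ := h
    rw [TwoSidedIdeal.mem_sInf] at ha hb
    push_neg at ha hb
    obtain ⟨I, hI, haI⟩ := ha
    obtain ⟨J, hJ, hbJ⟩ := hb
    rcases hc.total hI hJ with hle | hle
    · rcases (hp I hI).2 a b (fun r => (TwoSidedIdeal.mem_sInf (R := R)).mp (hab r) I hI) with h | h
      · exact haI h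
      · exact hbJ (hle h)
    · rcases (hp J hJ).2 a b (fun r => (TwoSidedIdeal.mem_sInf (R := R)).mp (hab r) J hJ) with h | h
      · exact haI (hle h)
      · exact hbJ h

lemma zorn_min {α : Type*} [PartialOrder α] (s : Set α)
    (ih : ∀ c ⊆ s, IsChain (· ≤ ·) c → ∀ y ∈ c, ∃ lb ∈ s, ∀ z ∈ c, lb ≤ z)
    (x : α) (hxs : x ∈ s) : ∃ m, m ≤ x ∧ Minimal (· ∈ s) m :=
  zorn_le_nonempty₀ (α := αᵒᵈ) s (fun c hcs hc y hy => ih c hcs hc.symm y hy) x hxs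

theorem stmt9 {R : Type*} [Ring R]
    (hup : ∀ c : Set (TwoSidedIdeal R), c.Nonempty → IsChain (· ≤ ·) c →
      (∀ P ∈ c, IsPrimeTwoSided P) → IsPrimeTwoSided (sSup c)) :
    ∀ P Q : TwoSidedIdeal R, IsPrimeTwoSided P → IsPrimeTwoSided Q → P < Q →
      ∃ P' Q' : TwoSidedIdeal R, IsPrimeTwoSided P' ∧ IsPrimeTwoSided Q' ∧
        P ≤ P' ∧ P' < Q' ∧ Q' ≤ Q ∧
        ∀ T : TwoSidedIdeal R, IsPrimeTwoSided T → ¬ (P' < T ∧ T < Q') := by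
  intro P Q hP hQ hPQ
  obtain ⟨a, haQ, haP⟩ := SetLike.exists_of_lt hPQ
  -- maximal prime P ≤ P' ≤ Q with a ∉ P'
  obtain ⟨P', hPP', ⟨hP'p, -, hP'Q, haP'⟩, hP'max⟩ :=
    zorn_le_nonempty₀
      {T : TwoSidedIdeal R | IsPrimeTwoSided T ∧ P ≤ T ∧ T ≤ Q ∧ a ∉ T}
      (fun c hcS hc y hy => by
        refine ⟨sSup c, ⟨hup c ⟨y, hy⟩ hc (fun T hT => (hcS hT).1),
          le_trans (hcS hy).2.1 (le_sSup hy),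
          sSup_le fun T hT => (hcS hT).2.2.1, ?_⟩, fun z hz => le_sSup hz⟩
        intro hmem
        obtain ⟨I, hI, haI⟩ := mem_sSup_chain ⟨y, hy⟩ hc hmem
        exact (hcS hI).2.2.2 haI)
      P ⟨hP, le_refl P, hPQ.le, haP⟩
  -- minimal prime P' ≤ Q' ≤ Q with a ∈ Q'
  obtain ⟨Q', hQ'Qd, ⟨hQ'p, hP'Q', hQ'Q, haQ'⟩, hQ'min⟩ :=
    zorn_min {T : TwoSidedIdeal R | IsPrimeTwoSided T ∧ P' ≤ T ∧ T ≤ Q ∧ a ∈ T}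
      (fun c hcS hc y hy =>
        ⟨sInf c, ⟨sInf_chain_prime c ⟨y, hy⟩ hc (fun T hT => (hcS hT).1),
          le_sInf fun T hT => (hcS hT).2.1,
          le_trans (sInf_le hy) (hcS hy).2.2.1,
          (TwoSidedIdeal.mem_sInf (R := R)).mpr fun T hT => (hcS hT).2.2.2⟩,
          fun z hz => sInf_le hz⟩)
      Q ⟨hQ, hP'Q, le_refl Q, haQ⟩
  refine ⟨P', Q', hP'p, hQ'p, hPP', lt_of_le_of_ne hP'Q' ?_, hQ'Q, ?_⟩
  · rintro rfl; exact haP' haQ'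
  · rintro T hT ⟨hPT, hTQ⟩
    by_cases haT : a ∈ T
    · exact hTQ.not_ge (hQ'min ⟨hT, hPT.le, hTQ.le.trans hQ'Q, haT⟩ hTQ.le)
    · exact hPT.not_ge (hP'max ⟨hT, hPP'.trans hPT.le, hTQ.le.trans hQ'Q, haT⟩ hPT.le)
end

section
/- Let R be a commutative ring that is semiprime and such that R/P is von Neumann regular for every prime ideal P of R. Then R is von Neumann regular. -/
theorem stmt14 {R : Type*} [CommRing R]
    (hsemi : ∀ a : R, IsNilpotent a → a = 0)
    (hquot : ∀ P : Ideal R, P.IsPrime → ∀ x : R ⧸ P, ∃ p : R ⧸ P, x = x * p * x) :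
    ∀ r : R, ∃ p : R, r = r * p * r := by
  -- every prime quotient is a field, so every prime is maximal
  have hmax : ∀ P : Ideal R, P.IsPrime → P.IsMaximal := by
    intro P hP
    apply Ideal.Quotient.maximal_of_isField
    refine ⟨exists_pair_ne _, mul_comm, ?_⟩
    intro x hx
    obtain ⟨p, hp⟩ := hquot P hP x
    refine ⟨p, ?_⟩
    have : x * (p * x - 1) = 0 := by ring_nf; linear_combination -hp
    rcases mul_eq_zero.mp this with h | h
    · exact absurd h hx
    · linear_combination h
  -- hence every prime is a minimal prime
  have hmin : ∀ P : Ideal R, P.IsPrime → P ∈ minimalPrimes R := by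
    intro P hP
    rw [minimalPrimes_eq_minimals]
    refine ⟨hP, ?_⟩
    intro Q hQ hQP
    exact ((hmax Q hQ).eq_of_le hP.ne_top hQP).ge
  intro r
  set A : Ideal R := LinearMap.ker (LinearMap.mulLeft R r) with hA
  by_cases hI : Ideal.span {r} ⊔ A = ⊤
  · have h1 : (1 : R) ∈ Ideal.span {r} ⊔ A := hI ▸ Submodule.mem_top
    obtain ⟨y, hy, z, hz, hyz⟩ := Submodule.mem_sup.mp h1
    obtain ⟨a, rfl⟩ := Ideal.mem_span_singleton'.mp hy
    have hz0 : r * z = 0 := by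
      have := (LinearMap.mem_ker.mp hz)
      simpa [LinearMap.mulLeft_apply] using this
    refine ⟨a, ?_⟩
    have : r * (a * r + z) = r * 1 := by rw [hyz]
    rw [mul_add, hz0] at this
    linear_combination -this
  · obtain ⟨M, hM, hle⟩ := Ideal.exists_le_maximal _ hI
    have hMp : M.IsPrime := hM.isPrime
    have hMmin : M ∈ minimalPrimes R := hmin M hMp
    have hrM : r ∈ M := hle (Ideal.mem_sup_left (Ideal.subset_span rfl))
    exfalso
    -- localize at M
    have hnil : IsNilpotent (algebraMap R (Localization M.primeCompl) r) := by
      have h := IsLocalization.AtPrime.radical_map_of_mem_minimalPrimes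
        (A := Localization M.primeCompl) M ⊥ hMmin
      rw [Ideal.map_bot] at h
      have hx : algebraMap R (Localization M.primeCompl) r ∈
          (⊥ : Ideal (Localization M.primeCompl)).radical := h ▸ Ideal.mem_map_of_mem _ hrM
      obtain ⟨n, hn⟩ := hx
      exact ⟨n, by simpa using hn⟩
    obtain ⟨n, hn⟩ := hnil
    rw [← map_pow] at hn
    obtain ⟨s, hs⟩ := (IsLocalization.map_eq_zero_iff M.primeCompl _ _).mp hn
    have hsr : (s : R) * r = 0 := by
      rcases n with _ | m
      · simp at hs
        rw [hs, zero_mul]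
      · apply hsemi
        refine ⟨m + 1, ?_⟩
        rw [mul_pow, pow_succ (s : R)]
        rw [mul_assoc]
        rw [hs, mul_zero]
    have : (s : R) ∈ A := by
      rw [hA, LinearMap.mem_ker, LinearMap.mulLeft_apply, mul_comm]
      exact hsr
    exact s.2 (hle (le_sup_right (α := Ideal R) this))
end
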